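/- Let P₁ = Gamma(∑x_i + 1, 1/n) be the Poisson posterior under a uniform prior and P₂ = Gamma(∑x_i + 1, 1/(n+λ)) the posterior under an Exp(λ) prior, with ∑_{i=1}^n x_i ≥ 1 and λ > 0. Then d_W(P₁, P₂) = λ(x̄ + 1/n)/(n+λ), where x̄ = (1/n)∑x_i. -/

import Mathlib

/-!
Write `c = n / (n + λ) ≤ 1`. Rescaling shows that `Gamma(k, rate n + λ)` is the law of `c θ` for
`θ ∼ Gamma(k, rate n)`. Since `c θ ≤ θ`, every 1-Lipschitz `h` gives
`|E h(c θ) - E h(θ)| ≤ E (θ - c θ) = (1 - c) k / n`, with equality for `h = id`.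
-/

open MeasureTheory ProbabilityTheory Real NNReal

namespace ProbabilityTheory

theorem integral_gammaMeasure {a r : ℝ} (ha : 0 < a) (hr : 0 < r) (h : ℝ → ℝ) :
    ∫ x, h x ∂gammaMeasure a r = ∫ x, gammaPDFReal a r x * h x := by
  rw [gammaMeasure, integral_withDensity_eq_integral_toReal_smul (f := gammaPDF a r)
    (measurable_gammaPDFReal a r).ennreal_ofReal (.of_forall fun _ => ENNReal.ofReal_lt_top)]
  simp only [gammaPDF, ENNReal.toReal_ofReal (gammaPDFReal_nonneg ha hr _), smul_eq_mul]

theorem gammaPDFReal_div_mul {a r c : ℝ} (hr : 0 ≤ r) (hc : 0 < c) (x : ℝ) :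
    gammaPDFReal a (r / c) (c * x) = c⁻¹ * gammaPDFReal a r x := by
  unfold gammaPDFReal
  by_cases hx : 0 ≤ x
  · rw [if_pos (mul_nonneg hc.le hx), if_pos hx, div_rpow hr hc.le, mul_rpow hc.le hx,
      rpow_sub_one hc.ne', show r / c * (c * x) = r * x by field_simp]
    field_simp
  · rw [if_neg (by nlinarith), if_neg hx, mul_zero]

theorem integral_gammaMeasure_div {a r c : ℝ} (ha : 0 < a) (hr : 0 < r) (hc : 0 < c)
    (h : ℝ → ℝ) :
    ∫ x, h x ∂gammaMeasure a (r / c) = ∫ x, h (c * x) ∂gammaMeasure a r := by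
  rw [integral_gammaMeasure ha (div_pos hr hc), integral_gammaMeasure ha hr]
  have := Measure.integral_comp_mul_left (fun x => gammaPDFReal a (r / c) x * h x) c
  simp only [gammaPDFReal_div_mul hr.le hc, abs_of_pos (inv_pos.2 hc), smul_eq_mul, mul_assoc,
    integral_const_mul] at this
  exact (mul_left_cancel₀ (inv_ne_zero hc.ne') this).symm

theorem id_mul_gammaPDFReal {a r : ℝ} (ha : 0 < a) (hr : 0 < r) (x : ℝ) :
    x * gammaPDFReal a r x = a / r * gammaPDFReal (a + 1) r x := by
  unfold gammaPDFReal
  split_ifs with hx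
  · rw [add_sub_cancel_right, Gamma_add_one ha.ne', rpow_add_one hr.ne',
      show x ^ a = x * x ^ (a - 1) by rw [← rpow_one_add' hx (by linarith), add_sub_cancel]]
    field_simp
  · simp

theorem integral_gammaPDFReal {a r : ℝ} (ha : 0 < a) (hr : 0 < r) :
    ∫ x, gammaPDFReal a r x = 1 := by
  have := isProbabilityMeasure_gammaMeasure ha hr
  simpa using (integral_gammaMeasure ha hr fun _ => 1).symm

theorem integral_id_gammaMeasure {a r : ℝ} (ha : 0 < a) (hr : 0 < r) :
    ∫ x, x ∂gammaMeasure a r = a / r := by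
  simp_rw [integral_gammaMeasure ha hr, mul_comm (gammaPDFReal a r _), id_mul_gammaPDFReal ha hr,
    integral_const_mul, integral_gammaPDFReal (by linarith : 0 < a + 1) hr, mul_one]

theorem integrable_id_gammaMeasure {a r : ℝ} (ha : 0 < a) (hr : 0 < r) :
    Integrable (fun x => x) (gammaMeasure a r) :=
  .of_integral_ne_zero (by rw [integral_id_gammaMeasure ha hr]; positivity)

theorem ae_nonneg_gammaMeasure (a r : ℝ) : ∀ᵐ x ∂gammaMeasure a r, 0 ≤ x := by
  rw [gammaMeasure,
    ae_withDensity_iff (f := gammaPDF a r) (measurable_gammaPDFReal a r).ennreal_ofReal]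
  exact .of_forall fun x hx => not_lt.1 fun hneg => hx (gammaPDF_of_neg hneg)

-- The two densities differ only at `θ = 0` (`0 < θ` here, `0 ≤ θ` in `gammaPDFReal`).
theorem gammaMeasure_inv_eq_withDensity {k s : ℝ} (hs : 0 < s) :
    gammaMeasure k s⁻¹ = volume.withDensity fun θ => ENNReal.ofReal (if 0 < θ then
      (Real.Gamma k)⁻¹ * (s ^ k)⁻¹ * θ ^ (k - 1) * Real.exp (-θ / s) else 0) := by
  refine withDensity_congr_ae ((volume.ae_ne 0).mono fun θ hθ => ?_)
  dsimp only
  rw [gammaPDF, gammaPDFReal]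
  rcases hθ.lt_or_gt with hneg | hpos
  · rw [if_neg hneg.not_ge, if_neg hneg.not_gt]
  · rw [if_pos hpos.le, if_pos hpos, inv_rpow hs.le, neg_div, div_eq_inv_mul]
    ring_nf

end ProbabilityTheory

section LipschitzCoupling

variable {Ω : Type*} [MeasurableSpace Ω] {μ : Measure Ω} [IsFiniteMeasure μ]

theorem LipschitzWith.integrable_comp {E F : Type*} [NormedAddCommGroup E]
    [NormedAddCommGroup F] {K : ℝ≥0} {h : E → F} (hh : LipschitzWith K h) {f : Ω → E}
    (hf : Integrable f μ) : Integrable (fun ω => h (f ω)) μ := by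
  refine ((integrable_const ‖h 0‖).add (hf.norm.const_mul K)).mono'
    (hh.continuous.comp_aestronglyMeasurable hf.1) (.of_forall fun ω => ?_)
  have := hh.dist_le_mul (f ω) 0
  rw [dist_eq_norm, dist_eq_norm, sub_zero] at this
  show ‖h (f ω)‖ ≤ ‖h 0‖ + K * ‖f ω‖
  linarith [norm_le_insert' (h (f ω)) (h 0)]

theorem LipschitzWith.abs_integral_comp_sub_le {K : ℝ≥0} {h : ℝ → ℝ} (hh : LipschitzWith K h)
    {f g : Ω → ℝ} (hf : Integrable f μ) (hg : Integrable g μ) :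
    |∫ ω, h (f ω) ∂μ - ∫ ω, h (g ω) ∂μ| ≤ K * ∫ ω, |f ω - g ω| ∂μ := by
  rw [← integral_sub (hh.integrable_comp hf) (hh.integrable_comp hg), ← integral_const_mul,
    ← Real.norm_eq_abs]
  refine norm_integral_le_of_norm_le (((hf.sub hg).abs).const_mul K) (.of_forall fun ω => ?_)
  simpa only [Real.dist_eq, Real.norm_eq_abs] using hh.dist_le_mul (f ω) (g ω)

/-- For `f ≤ g` the coupling `(f, g)` is optimal in the Kantorovich–Rubinstein sense: the
identity attains the Lipschitz bound. -/
theorem isLUB_abs_integral_lipschitz_comp_sub {f g : Ω → ℝ} (hf : Integrable f μ)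
    (hg : Integrable g μ) (hfg : f ≤ᵐ[μ] g) :
    IsLUB {d | ∃ h : ℝ → ℝ, LipschitzWith 1 h ∧ d = |∫ ω, h (f ω) ∂μ - ∫ ω, h (g ω) ∂μ|}
      (∫ ω, g ω - f ω ∂μ) := by
  have hdiff : 0 ≤ᵐ[μ] fun ω => g ω - f ω := hfg.mono fun ω hω => sub_nonneg.2 hω
  refine ⟨?_, fun b hb => hb ⟨id, LipschitzWith.id, ?_⟩⟩
  · rintro _ ⟨h, hh, rfl⟩
    calc |∫ ω, h (f ω) ∂μ - ∫ ω, h (g ω) ∂μ| ≤ 1 * ∫ ω, |f ω - g ω| ∂μ :=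
          hh.abs_integral_comp_sub_le hf hg
      _ = ∫ ω, g ω - f ω ∂μ := by
          rw [one_mul]
          exact integral_congr_ae
            (hdiff.mono fun ω hω => (abs_sub_comm _ _).trans (abs_of_nonneg hω))
  · simp only [id_eq]
    rw [abs_sub_comm, ← integral_sub hg hf, abs_of_nonneg (integral_nonneg_of_ae hdiff)]

end LipschitzCoupling

theorem wasserstein_poisson_posteriors_general
    (n : ℕ) (hn : 1 ≤ n) (x : Fin n → ℕ)
    (lam : ℝ) (hlam : 0 < lam)
    (gammaPdf : ℝ → ℝ → ℝ → ℝ)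
    (hgamma : gammaPdf = fun k s θ => if 0 < θ then
        (Real.Gamma k)⁻¹ * (s ^ k)⁻¹ * θ ^ (k - 1) * Real.exp (-θ / s) else 0)
    (P₁ P₂ : Measure ℝ)
    (hP₁ : P₁ = volume.withDensity
        (fun θ => ENNReal.ofReal (gammaPdf ((∑ i, x i : ℕ) + 1) (1 / n) θ)))
    (hP₂ : P₂ = volume.withDensity
        (fun θ => ENNReal.ofReal (gammaPdf ((∑ i, x i : ℕ) + 1) (1 / (n + lam)) θ)))
    (xbar : ℝ) (hxbar : xbar = (∑ i, (x i : ℝ)) / n)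
    (W : ℝ)
    (hW : IsLUB {d : ℝ | ∃ h : ℝ → ℝ, LipschitzWith 1 h ∧
        d = |(∫ θ, h θ ∂P₂) - ∫ θ, h θ ∂P₁|} W) :
    W = lam * (xbar + 1 / n) / (n + lam) := by
  subst hgamma hP₁ hP₂ hxbar
  set k : ℝ := (∑ i, x i : ℕ) + 1
  have hk : 0 < k := by positivity
  have hn₀ : (0 : ℝ) < n := by exact_mod_cast hn
  set c : ℝ := n / (n + lam)
  have hc : 0 < c := by positivity
  rw [← gammaMeasure_inv_eq_withDensity (by positivity),
    ← gammaMeasure_inv_eq_withDensity (by positivity), one_div, one_div, inv_inv, inv_inv,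
    show (n : ℝ) + lam = n / c from (div_div_cancel₀ hn₀.ne').symm] at hW
  simp_rw [integral_gammaMeasure_div hk hn₀ hc] at hW
  have := isProbabilityMeasure_gammaMeasure hk hn₀
  have hid := integrable_id_gammaMeasure hk hn₀
  rw [hW.unique (isLUB_abs_integral_lipschitz_comp_sub (hid.const_mul c) hid
    ((ae_nonneg_gammaMeasure k n).mono fun θ hθ => ?_)), integral_sub hid (hid.const_mul c),
    integral_const_mul, integral_id_gammaMeasure hk hn₀]
  · simp only [k, c]
    push_cast
    field_simp
    ring
  · exact mul_le_of_le_one_left hθ ((div_le_one (by positivity)).2 (by linarith))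

/-- The Wasserstein distance between the Poisson posteriors
`Gamma(∑xᵢ+1, 1/n)` (uniform prior) and `Gamma(∑xᵢ+1, 1/(n+λ))` (Exp(λ) prior)
equals `λ(x̄ + 1/n)/(n+λ)`. -/
theorem wasserstein_poisson_posteriors
    (n : ℕ) (hn : 1 ≤ n) (x : Fin n → ℕ) (hs : 1 ≤ ∑ i, x i)
    (lam : ℝ) (hlam : 0 < lam)
    (gammaPdf : ℝ → ℝ → ℝ → ℝ)
    (hgamma : gammaPdf = fun k s θ => if 0 < θ then
        (Real.Gamma k)⁻¹ * (s ^ k)⁻¹ * θ ^ (k - 1) * Real.exp (-θ / s) else 0)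
    (P₁ P₂ : Measure ℝ)
    (hP₁ : P₁ = volume.withDensity
        (fun θ => ENNReal.ofReal (gammaPdf ((∑ i, x i : ℕ) + 1) (1 / n) θ)))
    (hP₂ : P₂ = volume.withDensity
        (fun θ => ENNReal.ofReal (gammaPdf ((∑ i, x i : ℕ) + 1) (1 / (n + lam)) θ)))
    (xbar : ℝ) (hxbar : xbar = (∑ i, (x i : ℝ)) / n)
    (W : ℝ)
    (hW : IsLUB {d : ℝ | ∃ h : ℝ → ℝ, LipschitzWith 1 h ∧
        d = |(∫ θ, h θ ∂P₂) - ∫ θ, h θ ∂P₁|} W) :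
    W = lam * (xbar + 1 / n) / (n + lam) :=
  wasserstein_poisson_posteriors_general n hn x lam hlam gammaPdf hgamma P₁ P₂ hP₁ hP₂ xbar hxbar W
    hW
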